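/- Suppose F satisfies assumption (A) and there exists x₀ ∈ X such that Colev_{<^l}(F, F(x₀)) is relatively compact (its closure in X is compact). Then x₀ ∈ l-SWEff(F) or F satisfies q-sgicc. -/

import Mathlib

open Pointwise

/-- The Gerstewitz scalarization function `ψ^q_P(y) = sup {t : ℝ | y ∈ t • q + P}`. -/
noncomputable def psi {Y : Type*} [AddCommGroup Y] [Module ℝ Y] (P : Set Y) (q : Y) (y : Y) : ℝ :=
  sSup {t : ℝ | y - t • q ∈ P}

/-- Assumption (A): `ψ^q_P` attains its infimum on `F(x)` for all `x`. -/
def AssumptionA {X Y : Type*} [AddCommGroup Y] [Module ℝ Y]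
    (P : Set Y) (q : Y) (F : X → Set Y) : Prop :=
  ∀ x : X, ∃ z ∈ F x, ∀ w ∈ F x, psi P q z ≤ psi P q w

/-- The colevel set of `F` at height `B ⊆ Y`: `{x : F(x) ⊄ B + int P}`. -/
def ColevB {X Y : Type*} [AddCommGroup Y] [Module ℝ Y] [TopologicalSpace Y]
    (P : Set Y) (F : X → Set Y) (B : Set Y) : Set X :=
  {x | ¬ F x ⊆ B + interior P}

/-- The colevel set of `F` at height `λ • q`:
`Colev_{<ˡ}(F, λq) = {x ∈ X : F(x) ⊄ λ • q + int P}`. -/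
def Colev {X Y : Type*} [AddCommGroup Y] [Module ℝ Y] [TopologicalSpace Y]
    (P : Set Y) (q : Y) (F : X → Set Y) (lam : ℝ) : Set X :=
  {x | ¬ F x ⊆ {y : Y | y - lam • q ∈ interior P}}

/-- `M_F^q = sup {t ∈ ℝ : F(X) ⊆ t • q + P} ∈ ℝ ∪ {±∞}` (with `sup ∅ = -∞`). -/
noncomputable def Mq {X Y : Type*} [AddCommGroup Y] [Module ℝ Y]
    (P : Set Y) (q : Y) (F : X → Set Y) : EReal :=
  sSup ((fun t : ℝ => (t : EReal)) '' {t : ℝ | ∀ x : X, ∀ z ∈ F x, z - t • q ∈ P})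

/-- `x̄` is a strict weakly `l`-efficient solution of (SOP). -/
def SWEff {X Y : Type*} [AddCommGroup Y] [Module ℝ Y] [TopologicalSpace Y]
    (P : Set Y) (F : X → Set Y) (xbar : X) : Prop :=
  ¬ ∃ x : X, x ≠ xbar ∧ F xbar ⊆ F x + interior P

/-- `F` satisfies `q`-sgicc: there is a real `λ > M_F^q` such that `Colev_{<ˡ}(F, λq)`
is relatively compact. -/
def Sgicc {X Y : Type*} [TopologicalSpace X] [AddCommGroup Y] [Module ℝ Y] [TopologicalSpace Y]
    (P : Set Y) (q : Y) (F : X → Set Y) : Prop :=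
  ∃ lam : ℝ, Mq P q F < (lam : EReal) ∧ IsCompact (closure (Colev P q F lam))

/-!
Write `m(x) = min_{F x} ψ`, which exists by (A). Since `P` is a closed convex cone with `q` in its
interior, `ψ` is superadditive and positive on `int P`, and `t < ψ y ↔ y - t • q ∈ int P`.
If `x₀` is not strictly weakly efficient, then `F x₀ ⊆ F x₁ + int P` for some `x₁`, so
`m(x₁) < m(x₀)`. For `λ` strictly between them, `M_F^q ≤ m(x₁) < λ`, and every `x` with
`F x ⊆ F x₀ + int P` has `ψ > m(x₀) > λ` on `F x`, i.e. `F x ⊆ λ • q + int P`. Hence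
`Colev(F, λq) ⊆ Colev(F, F x₀)`, which is relatively compact.
-/

open Filter Topology Set

theorem Convex.add_mem_of_smul_mem {Y : Type*} [AddCommGroup Y] [Module ℝ Y] {P : Set Y}
    (hPconv : Convex ℝ P) (hPcone : ∀ c : ℝ, 0 < c → ∀ y ∈ P, c • y ∈ P)
    {a b : Y} (ha : a ∈ P) (hb : b ∈ P) : a + b ∈ P := by
  have hmid := hPconv ha hb (by norm_num : (0 : ℝ) ≤ 1 / 2) (by norm_num : (0 : ℝ) ≤ 1 / 2)
    (by norm_num)
  convert hPcone 2 two_pos _ hmid using 1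
  module

theorem exists_pos_add_smul_mem {Y : Type*} [AddCommGroup Y] [Module ℝ Y] [TopologicalSpace Y]
    [ContinuousAdd Y] [ContinuousSMul ℝ Y] {x : Y} {U : Set Y} (hU : U ∈ 𝓝 x) (y : Y) :
    ∃ c : ℝ, 0 < c ∧ x + c • y ∈ U := by
  have hlim : Tendsto (fun c : ℝ => x + c • y) (𝓝[>] 0) (𝓝 x) := by
    have hcont : Continuous fun c : ℝ => x + c • y := by fun_prop
    simpa using (hcont.tendsto 0).mono_left nhdsWithin_le_nhds
  obtain ⟨c, hcU, hc⟩ := ((hlim.eventually hU).and self_mem_nhdsWithin).exists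
  exact ⟨c, hc, hcU⟩

namespace ConvexCone

variable {Y : Type*} [AddCommGroup Y] [Module ℝ Y] [TopologicalSpace Y] (C : ConvexCone ℝ Y)

theorem add_mem_interior [IsTopologicalAddGroup Y] {a b : Y} (ha : a ∈ C)
    (hb : b ∈ interior (C : Set Y)) : a + b ∈ interior (C : Set Y) :=
  interior_mono (add_subset_iff.2 fun _ hx _ hy => C.add_mem hx hy)
    (subset_interior_add_right (add_mem_add ha hb))

theorem smul_mem_interior [ContinuousSMul ℝ Y] {c : ℝ} (hc : 0 < c) {b : Y}
    (hb : b ∈ interior (C : Set Y)) : c • b ∈ interior (C : Set Y) := by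
  have hsub : c • (C : Set Y) ⊆ C := by
    rintro _ ⟨x, hx, rfl⟩
    exact C.smul_mem hc hx
  have hcb : c • b ∈ interior (c • (C : Set Y)) := by
    rw [interior_smul₀ hc.ne']
    exact smul_mem_smul_set hb
  exact interior_mono hsub hcb

theorem neg_notMem_of_mem_interior [IsTopologicalAddGroup Y] [ContinuousSMul ℝ Y] (hC : (C : Set Y) ≠ univ) {q : Y}
    (hq : q ∈ interior (C : Set Y)) : -q ∉ C := by
  intro hnq
  have h0 : (0 : Y) ∈ interior (C : Set Y) := by
    simpa using C.add_mem_interior hnq hq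
  refine hC (eq_univ_of_forall fun y => ?_)
  obtain ⟨c, hc, hcy⟩ := exists_pos_add_smul_mem (mem_interior_iff_mem_nhds.1 h0) y
  rw [zero_add] at hcy
  simpa [smul_smul, inv_mul_cancel₀ hc.ne'] using C.smul_mem (inv_pos.2 hc) hcy

end ConvexCone

section Scalarization

variable {Y : Type*} [AddCommGroup Y] [Module ℝ Y] [TopologicalSpace Y]
  [IsTopologicalAddGroup Y] [ContinuousSMul ℝ Y] {C : ConvexCone ℝ Y} {q : Y}

theorem nonempty_setOf_sub_smul_mem (hq : q ∈ interior (C : Set Y)) (y : Y) :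
    {t : ℝ | y - t • q ∈ C}.Nonempty := by
  obtain ⟨c, hc, hcy⟩ := exists_pos_add_smul_mem (mem_interior_iff_mem_nhds.1 hq) y
  refine ⟨-c⁻¹, ?_⟩
  have hscaled := C.smul_mem (inv_pos.2 hc) hcy
  rwa [smul_add, smul_smul, inv_mul_cancel₀ hc.ne', one_smul, add_comm, ← sub_neg_eq_add,
    ← neg_smul] at hscaled

theorem bddAbove_setOf_sub_smul_mem (hC : IsClosed (C : Set Y)) (hnq : -q ∉ C) (y : Y) :
    BddAbove {t : ℝ | y - t • q ∈ C} := by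
  have hnhds : {s : ℝ | s • y - q ∉ C} ∈ 𝓝 0 :=
    (hC.preimage (by fun_prop)).isOpen_compl.mem_nhds (by simpa using hnq)
  obtain ⟨ε, hε, hball⟩ := Metric.mem_nhds_iff.1 hnhds
  refine ⟨ε⁻¹, fun t ht => le_of_not_gt fun hlt => ?_⟩
  have ht0 : 0 < t := (inv_pos.2 hε).trans hlt
  -- Scaling `y - t • q ∈ C` by `t⁻¹` puts `t⁻¹ • y - q` in `C`, with `t⁻¹` arbitrarily small.
  refine hball (a := t⁻¹) ?_ ?_
  · rw [Metric.mem_ball, Real.dist_0_eq_abs, abs_of_pos (inv_pos.2 ht0)]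
    exact inv_lt_of_inv_lt₀ hε hlt
  · convert C.smul_mem (inv_pos.2 ht0) ht using 1
    rw [smul_sub, smul_smul, inv_mul_cancel₀ ht0.ne', one_smul]

theorem sub_psi_smul_mem (hC : IsClosed (C : Set Y)) (hq : q ∈ interior (C : Set Y))
    (hnq : -q ∉ C) (y : Y) : y - psi C q y • q ∈ C :=
  (hC.preimage (by fun_prop : Continuous fun t : ℝ => y - t • q)).csSup_mem
    (nonempty_setOf_sub_smul_mem hq y) (bddAbove_setOf_sub_smul_mem hC hnq y)

theorem le_psi_iff (hC : IsClosed (C : Set Y)) (hq : q ∈ interior (C : Set Y)) (hnq : -q ∉ C)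
    {y : Y} {t : ℝ} : t ≤ psi C q y ↔ y - t • q ∈ C := by
  refine ⟨fun ht => ?_, fun ht => le_csSup (bddAbove_setOf_sub_smul_mem hC hnq y) ht⟩
  rcases ht.eq_or_lt with rfl | ht
  · exact sub_psi_smul_mem hC hq hnq y
  · have hmem := C.add_mem (sub_psi_smul_mem hC hq hnq y)
      (C.smul_mem (sub_pos.2 ht) (interior_subset hq))
    convert hmem using 1
    module

theorem lt_psi_iff (hC : IsClosed (C : Set Y)) (hq : q ∈ interior (C : Set Y)) (hnq : -q ∉ C)
    {y : Y} {t : ℝ} : t < psi C q y ↔ y - t • q ∈ interior (C : Set Y) := by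
  constructor
  · intro ht
    have hmem := C.add_mem_interior (sub_psi_smul_mem hC hq hnq y)
      (C.smul_mem_interior (sub_pos.2 ht) hq)
    convert hmem using 1
    module
  · intro ht
    obtain ⟨c, hc, hcy⟩ := exists_pos_add_smul_mem (mem_interior_iff_mem_nhds.1 ht) (-q)
    have hle : t + c ≤ psi C q y := by
      rw [le_psi_iff hC hq hnq, show y - (t + c) • q = y - t • q + c • -q by module]
      exact hcy
    linarith

theorem psi_add_psi_le (hC : IsClosed (C : Set Y)) (hq : q ∈ interior (C : Set Y))
    (hnq : -q ∉ C) (a b : Y) : psi C q a + psi C q b ≤ psi C q (a + b) := by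
  rw [le_psi_iff hC hq hnq]
  convert C.add_mem (sub_psi_smul_mem hC hq hnq a) (sub_psi_smul_mem hC hq hnq b) using 1
  module

theorem lt_psi_of_mem_add_interior (hC : IsClosed (C : Set Y)) (hq : q ∈ interior (C : Set Y))
    (hnq : -q ∉ C) {A : Set Y} {m : ℝ} (hA : ∀ w ∈ A, m ≤ psi C q w) {z : Y}
    (hz : z ∈ A + interior (C : Set Y)) : m < psi C q z := by
  obtain ⟨w, hw, p, hp, rfl⟩ := hz
  have hp : 0 < psi C q p := (lt_psi_iff hC hq hnq).2 (by simpa using hp)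
  linarith [hA w hw, psi_add_psi_le hC hq hnq w p]

end Scalarization

section SetValued

variable {X Y : Type*} [AddCommGroup Y] [Module ℝ Y] [TopologicalSpace Y]
  [IsTopologicalAddGroup Y] [ContinuousSMul ℝ Y] {C : ConvexCone ℝ Y} {q : Y} {F : X → Set Y}

theorem Mq_le_psi (hC : IsClosed (C : Set Y)) (hq : q ∈ interior (C : Set Y)) (hnq : -q ∉ C)
    {x : X} {z : Y} (hz : z ∈ F x) : Mq C q F ≤ psi C q z :=
  sSup_le <| forall_mem_image.2 fun _ ht =>
    EReal.coe_le_coe_iff.2 <| (le_psi_iff hC hq hnq).2 (ht x z hz)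

theorem Colev_subset_ColevB (hC : IsClosed (C : Set Y)) (hq : q ∈ interior (C : Set Y))
    (hnq : -q ∉ C) {B : Set Y} {lam : ℝ} (hB : ∀ w ∈ B, lam ≤ psi C q w) :
    Colev C q F lam ⊆ ColevB C F B :=
  fun _ hx hsub => hx fun _ hz =>
    (lt_psi_iff hC hq hnq).1 (lt_psi_of_mem_add_interior hC hq hnq hB (hsub hz))

end SetValued

theorem stmt13_general {X Y : Type*} [TopologicalSpace X]
    [AddCommGroup Y] [Module ℝ Y] [TopologicalSpace Y]
    [IsTopologicalAddGroup Y] [ContinuousSMul ℝ Y]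
    (P : Set Y) (hPclosed : IsClosed P) (hPconv : Convex ℝ P)
    (hPcone : ∀ c : ℝ, 0 < c → ∀ y ∈ P, c • y ∈ P)
    (hPuniv : P ≠ Set.univ)
    (q : Y) (hq : q ∈ interior P)
    (F : X → Set Y)
    (hA : AssumptionA P q F)
    (x₀ : X) (hcpt : IsCompact (closure (ColevB P F (F x₀)))) :
    SWEff P F x₀ ∨ Sgicc P q F := by
  obtain ⟨C, rfl⟩ : ∃ C : ConvexCone ℝ Y, (C : Set Y) = P :=
    ⟨⟨P, fun c hc y hy => hPcone c hc y hy,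
      fun _ ha _ hb => hPconv.add_mem_of_smul_mem hPcone ha hb⟩, rfl⟩
  have hnq : -q ∉ C := C.neg_notMem_of_mem_interior hPuniv hq
  refine or_iff_not_imp_left.2 fun hsw => ?_
  obtain ⟨x₁, -, hsub⟩ := not_not.1 hsw
  obtain ⟨z₀, hz₀, hmin₀⟩ := hA x₀
  obtain ⟨z₁, hz₁, hmin₁⟩ := hA x₁
  have hlt : psi C q z₁ < psi C q z₀ :=
    lt_psi_of_mem_add_interior hPclosed hq hnq hmin₁ (hsub hz₀)
  refine ⟨(psi C q z₁ + psi C q z₀) / 2, ?_, ?_⟩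
  · exact (Mq_le_psi hPclosed hq hnq hz₁).trans_lt (EReal.coe_lt_coe_iff.2 (by linarith))
  · refine hcpt.of_isClosed_subset isClosed_closure
      (closure_mono (Colev_subset_ColevB hPclosed hq hnq fun w hw => ?_))
    linarith [hmin₀ w hw]

/-- If `F` satisfies assumption (A) and `Colev_{<ˡ}(F, F(x₀))` is relatively compact,
then `x₀ ∈ l-SWEff(F)` or `F` satisfies `q`-sgicc. -/
theorem stmt13 {X Y : Type*} [TopologicalSpace X] [T2Space X]
    [AddCommGroup Y] [Module ℝ Y] [TopologicalSpace Y]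
    [IsTopologicalAddGroup Y] [ContinuousSMul ℝ Y] [T2Space Y]
    (P : Set Y) (hPclosed : IsClosed P) (hPconv : Convex ℝ P)
    (hP0 : (0 : Y) ∈ P) (hPcone : ∀ c : ℝ, 0 < c → ∀ y ∈ P, c • y ∈ P)
    (hPne : P ≠ {0}) (hPuniv : P ≠ Set.univ)
    (q : Y) (hq : q ∈ interior P)
    (F : X → Set Y) (hF : ∀ x, (F x).Nonempty)
    (hA : AssumptionA P q F)
    (x₀ : X) (hcpt : IsCompact (closure (ColevB P F (F x₀)))) :
    SWEff P F x₀ ∨ Sgicc P q F :=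
  stmt13_general P hPclosed hPconv hPcone hPuniv q hq F hA x₀ hcpt
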